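/- Let V, W be real inner product spaces, B : V × V → W symmetric bilinear with ‖B(u,u)‖ = c‖u‖² for all u ∈ V. Then for orthonormal u, v ∈ V one has ‖B(u,v)‖² = c² − (1/2)(c² + ⟨B(u,u), B(v,v)⟩), and in particular ‖B(u,v)‖² ≤ (3/2) c² and ‖B(u,v)‖² ≥ 0 forces ⟨B(u,u), B(v,v)⟩ ≤ c². -/

import Mathlib

/-!
Polarization: `B (u ± v) (u ± v) = (B u u + B v v) ± 2 B u v`, so the parallelogram law in `W`
expresses `‖B u v‖²` through the norms `‖B (u ± v) (u ± v)‖ = c ‖u ± v‖²` and `‖B u u + B v v‖`.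
This gives `2 ‖B u v‖² = c² (‖u‖² ‖v‖² + 2 ⟪u, v⟫²) - ⟪B u u, B v v⟫` for all `u, v`; for orthonormal
`u, v` the bounds follow from Cauchy–Schwarz, `|⟪B u u, B v v⟫| ≤ c²`.
-/

open scoped RealInnerProductSpace

section Polarization

variable {V W : Type*} [AddCommGroup V] [Module ℝ V] [AddCommGroup W] [Module ℝ W]
  (B : V →ₗ[ℝ] V →ₗ[ℝ] W) (hsymm : ∀ u v : V, B u v = B v u)
include hsymm

lemma LinearMap.apply_add_add_of_symm (u v : V) :
    B (u + v) (u + v) = (B u u + B v v) + (2 : ℝ) • B u v := by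
  simp only [map_add, LinearMap.add_apply, two_smul, hsymm v u]
  abel

lemma LinearMap.apply_sub_sub_of_symm (u v : V) :
    B (u - v) (u - v) = (B u u + B v v) - (2 : ℝ) • B u v := by
  simp only [map_sub, LinearMap.sub_apply, two_smul, hsymm v u]
  abel

end Polarization

section InnerProduct

variable {V W : Type*} [NormedAddCommGroup V] [InnerProductSpace ℝ V]
  [NormedAddCommGroup W] [InnerProductSpace ℝ W]

lemma norm_add_pow_four_add_norm_sub_pow_four (u v : V) :
    ‖u + v‖ ^ 4 + ‖u - v‖ ^ 4 = 2 * (‖u‖ ^ 2 + ‖v‖ ^ 2) ^ 2 + 8 * ⟪u, v⟫ ^ 2 := by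
  rw [show 4 = 2 * 2 from rfl, pow_mul, pow_mul, norm_add_sq_real, norm_sub_sq_real]
  ring

lemma LinearMap.norm_apply_add_add_sq_add_norm_apply_sub_sub_sq_of_symm
    (B : V →ₗ[ℝ] V →ₗ[ℝ] W) (hsymm : ∀ u v : V, B u v = B v u) (u v : V) :
    ‖B (u + v) (u + v)‖ ^ 2 + ‖B (u - v) (u - v)‖ ^ 2 =
      2 * ‖B u u + B v v‖ ^ 2 + 8 * ‖B u v‖ ^ 2 := by
  rw [B.apply_add_add_of_symm hsymm, B.apply_sub_sub_of_symm hsymm, norm_add_sq_real,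
    norm_sub_sq_real, norm_smul, Real.norm_two]
  ring

lemma LinearMap.two_mul_norm_apply_sq_of_norm_apply_self
    (B : V →ₗ[ℝ] V →ₗ[ℝ] W) (hsymm : ∀ u v : V, B u v = B v u)
    {c : ℝ} (hB : ∀ u : V, ‖B u u‖ = c * ‖u‖ ^ 2) (u v : V) :
    2 * ‖B u v‖ ^ 2 = c ^ 2 * (‖u‖ ^ 2 * ‖v‖ ^ 2 + 2 * ⟪u, v⟫ ^ 2) - ⟪B u u, B v v⟫ := by
  have hpar := B.norm_apply_add_add_sq_add_norm_apply_sub_sub_sq_of_symm hsymm u v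
  have hdiag := norm_add_pow_four_add_norm_sub_pow_four u v
  rw [hB, hB, norm_add_sq_real (B u u), hB, hB] at hpar
  linear_combination (-(1 : ℝ) / 4) * hpar + (c ^ 2 / 4) * hdiag

end InnerProduct

theorem stmt_12 {V W : Type*} [NormedAddCommGroup V] [InnerProductSpace ℝ V]
    [NormedAddCommGroup W] [InnerProductSpace ℝ W]
    (B : V →ₗ[ℝ] V →ₗ[ℝ] W) (hsymm : ∀ u v : V, B u v = B v u)
    (c : ℝ) (hB : ∀ u : V, ‖B u u‖ = c * ‖u‖ ^ 2)
    (u v : V) (hu : ‖u‖ = 1) (hv : ‖v‖ = 1) (huv : ⟪u, v⟫ = 0) :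
    ‖B u v‖ ^ 2 = c ^ 2 - (1 / 2) * (c ^ 2 + ⟪B u u, B v v⟫) ∧
      ‖B u v‖ ^ 2 ≤ (3 / 2) * c ^ 2 ∧ ⟪B u u, B v v⟫ ≤ c ^ 2 := by
  have hid := B.two_mul_norm_apply_sq_of_norm_apply_self hsymm hB u v
  rw [hu, hv, huv] at hid
  have hCS : |⟪B u u, B v v⟫| ≤ c ^ 2 := by
    simpa [hB, hu, hv, sq] using abs_real_inner_le_norm (B u u) (B v v)
  obtain ⟨hlower, hupper⟩ := abs_le.mp hCS
  exact ⟨by linarith, by linarith [sq_nonneg c], hupper⟩
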